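/- Conjugation of partitions gives a bijection between the set of unlimited parity alternating partitions of n with smallest part odd and the set of partitions of n in which every distinct part size appears an odd number of times: the conjugate of any partition in which all distinct part sizes occur an odd number of times is an unlimited parity alternating partition with smallest part odd, and vice versa. -/

import Mathlib

/-- A partition is (unlimited) parity alternating if any two consecutive distinct part
sizes have opposite parity. -/
def ParityAlternating {n : ℕ} (p : n.Partition) : Prop :=
  ∀ a ∈ p.parts, ∀ b ∈ p.parts, a < b →
    (∀ c ∈ p.parts, ¬(a < c ∧ c < b)) → (Odd a ↔ Even b)

/-- The smallest part of the partition is odd. -/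
def SmallestPartOdd {n : ℕ} (p : n.Partition) : Prop :=
  ∃ a ∈ p.parts, Odd a ∧ ∀ b ∈ p.parts, a ≤ b

/-- Every distinct part size occurs an odd number of times. -/
def OddMultAll {n : ℕ} (p : n.Partition) : Prop :=
  ∀ a ∈ p.parts, Odd (Multiset.count a p.parts)

/-- The multiset of parts of the conjugate partition: its `k`-th part (for `1 ≤ k`)
is the number of parts of the original partition that are at least `k`. -/
def conjParts (s : Multiset ℕ) : Multiset ℕ :=
  Multiset.filter (0 < ·)
    ((Finset.Icc 1 s.sum).val.map fun k => Multiset.card (s.filter fun a => k ≤ a))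

/-!
Write `c₁, c₂, …` for the multiplicities of the distinct parts of `λ`, from the largest part
down. The distinct parts of the conjugate of `λ` are the partial sums `c₁ < c₁ + c₂ < ⋯`, so
two consecutive distinct parts of the conjugate differ by one multiplicity, and its smallest part
is `c₁`. Hence all multiplicities of `λ` are odd exactly when its conjugate alternates in parity
and has an odd smallest part, and since conjugation is an involution it restricts to a bijection
between the two sets.
-/

open Finset

def partsGe (s : Multiset ℕ) (k : ℕ) : ℕ := Multiset.card (s.filter fun a => k ≤ a)

section partsGe

variable (s : Multiset ℕ)

lemma partsGe_antitone : Antitone (partsGe s) :=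
  fun _ _ h => Multiset.card_le_card (Multiset.monotone_filter_right s fun _ ha => h.trans ha)

lemma count_add_partsGe_succ (k : ℕ) : s.count k + partsGe s (k + 1) = partsGe s k := by
  induction s using Multiset.induction with
  | empty => simp [partsGe]
  | cons a s ih =>
    simp only [partsGe, Multiset.count_cons, Multiset.filter_cons] at *
    split_ifs <;>
      simp only [Multiset.card_add, Multiset.card_singleton, Multiset.card_zero] <;> omega

variable {s}

lemma exists_le_of_partsGe_pos {k : ℕ} (h : 0 < partsGe s k) : ∃ a ∈ s, k ≤ a := by
  obtain ⟨a, ha⟩ := Multiset.card_pos_iff_exists_mem.1 h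
  exact ⟨a, Multiset.mem_of_mem_filter ha, Multiset.of_mem_filter ha⟩

lemma sum_partsGe {N : ℕ} (hN : ∀ a ∈ s, a ≤ N) : ∑ k ∈ Icc 1 N, partsGe s k = s.sum := by
  induction s using Multiset.induction with
  | empty => simp [partsGe]
  | cons a s ih =>
    have hpart (k : ℕ) : partsGe (a ::ₘ s) k = partsGe s k + if k ≤ a then 1 else 0 := by
      by_cases h : k ≤ a <;> simp [partsGe, h]
    have hIcc : {k ∈ Icc 1 N | k ≤ a} = Icc 1 a := by
      ext k
      simp only [mem_filter, mem_Icc]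
      have := hN a (Multiset.mem_cons_self a s)
      omega
    simp only [hpart, sum_add_distrib, sum_boole, hIcc, Nat.card_Icc, Multiset.sum_cons,
      ih fun b hb => hN b (Multiset.mem_cons_of_mem hb)]
    simp [add_comm]

end partsGe

section conjParts

variable {s : Multiset ℕ}

lemma sum_conjParts (s : Multiset ℕ) : (conjParts s).sum = s.sum := by
  rw [conjParts, Multiset.filter_map, ← Finset.filter_val, ← Finset.sum_eq_multiset_sum]
  exact (sum_filter_of_ne fun _ _ h => Nat.pos_of_ne_zero h).trans
    (sum_partsGe fun _ ha => Multiset.le_sum_of_mem ha)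

lemma mem_conjParts {c : ℕ} : c ∈ conjParts s ↔ 0 < c ∧ ∃ k, 1 ≤ k ∧ partsGe s k = c := by
  simp only [conjParts, Multiset.mem_filter, Multiset.mem_map, Finset.mem_val, Finset.mem_Icc]
  constructor
  · rintro ⟨⟨k, ⟨hk, -⟩, rfl⟩, hc⟩
    exact ⟨hc, k, hk, rfl⟩
  · rintro ⟨hc, k, hk, rfl⟩
    obtain ⟨a, ha, hka⟩ := exists_le_of_partsGe_pos hc
    exact ⟨⟨k, ⟨hk, hka.trans (Multiset.le_sum_of_mem ha)⟩, rfl⟩, hc⟩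

lemma partsGe_mem_conjParts {k : ℕ} (hk : 1 ≤ k) (h : 0 < partsGe s k) :
    partsGe s k ∈ conjParts s :=
  mem_conjParts.2 ⟨h, k, hk, rfl⟩

lemma le_partsGe_succ_or_partsGe_le_of_mem_conjParts {c : ℕ} (hc : c ∈ conjParts s) (k : ℕ) :
    c ≤ partsGe s (k + 1) ∨ partsGe s k ≤ c := by
  obtain ⟨-, i, -, rfl⟩ := mem_conjParts.1 hc
  rcases le_or_gt i k with hik | hki
  · exact .inr (partsGe_antitone s hik)
  · exact .inl (partsGe_antitone s hki)

lemma partsGe_conjParts {k : ℕ} (hk : 1 ≤ k) :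
    partsGe (conjParts s) k = #{j ∈ Icc 1 s.sum | k ≤ partsGe s j} := by
  have hpos (c : ℕ) : k ≤ c ∧ 0 < c ↔ k ≤ c := and_iff_left_of_imp hk.trans
  simp only [partsGe, conjParts, Multiset.filter_filter, Multiset.filter_map,
    Function.comp_apply, hpos, Multiset.card_map]
  rfl

lemma le_partsGe_conjParts_iff {j k : ℕ} (hj : 1 ≤ j) (hk : 1 ≤ k) :
    j ≤ partsGe (conjParts s) k ↔ k ≤ partsGe s j := by
  rw [partsGe_conjParts hk]
  constructor
  · intro h
    by_contra! hlt
    have hsub : {i ∈ Icc 1 s.sum | k ≤ partsGe s i} ⊆ Icc 1 (j - 1) := by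
      intro i hi
      simp only [mem_filter, mem_Icc] at hi ⊢
      have : ¬ j ≤ i := fun hji => (partsGe_antitone s hji).not_gt (hlt.trans_le hi.2)
      omega
    have := card_le_card hsub
    simp only [Nat.card_Icc] at this
    omega
  · intro h
    obtain ⟨a, ha, hja⟩ := exists_le_of_partsGe_pos (hk.trans h)
    have hsub : Icc 1 j ⊆ {i ∈ Icc 1 s.sum | k ≤ partsGe s i} := by
      intro i hi
      simp only [mem_filter, mem_Icc] at hi ⊢
      exact ⟨⟨hi.1, hi.2.trans (hja.trans (Multiset.le_sum_of_mem ha))⟩,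
        h.trans (partsGe_antitone s hi.2)⟩
    simpa using card_le_card hsub

lemma partsGe_conjParts_conjParts {k : ℕ} (hk : 1 ≤ k) :
    partsGe (conjParts (conjParts s)) k = partsGe s k := by
  refine eq_of_forall_le_iff fun j => ?_
  rcases Nat.eq_zero_or_pos j with rfl | hj
  · simp
  · rw [le_partsGe_conjParts_iff hj hk, le_partsGe_conjParts_iff hk hj]

lemma eq_of_partsGe_eq {t : Multiset ℕ} (hs : ∀ a ∈ s, 0 < a) (ht : ∀ a ∈ t, 0 < a)
    (h : ∀ k, 1 ≤ k → partsGe s k = partsGe t k) : s = t := by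
  ext k
  rcases Nat.eq_zero_or_pos k with rfl | hk
  · rw [Multiset.count_eq_zero_of_notMem fun h => (hs 0 h).false,
      Multiset.count_eq_zero_of_notMem fun h => (ht 0 h).false]
  · have hs' := count_add_partsGe_succ s k
    have ht' := count_add_partsGe_succ t k
    rw [h k hk, h (k + 1) (by omega)] at hs'
    omega

lemma conjParts_conjParts (hs : ∀ a ∈ s, 0 < a) : conjParts (conjParts s) = s :=
  eq_of_partsGe_eq (fun _ hc => (mem_conjParts.1 hc).1) hs
    fun _ hk => partsGe_conjParts_conjParts hk

end conjParts

lemma Nat.exists_eq_and_succ_ne {α : Type*} (f : ℕ → α) {k k' : ℕ} (hk : k ≤ k')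
    (h : f k' ≠ f k) : ∃ j, f j = f k ∧ f (j + 1) ≠ f k := by
  by_contra! H
  exact h (Nat.le_induction rfl (fun i _ hi => H i hi) k' hk)

namespace Nat.Partition

variable {n : ℕ} (p : n.Partition)

def conj : n.Partition where
  parts := conjParts p.parts
  parts_pos hc := (mem_conjParts.1 hc).1
  parts_sum := (sum_conjParts _).trans p.parts_sum

lemma conj_involutive : Function.Involutive (conj (n := n)) :=
  fun p => Nat.Partition.ext (conjParts_conjParts fun _ => p.parts_pos)

lemma parityAlternating_conj (h : OddMultAll p) : ParityAlternating p.conj := by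
  intro x hx y hy hxy hgap
  obtain ⟨hx0, k', -, rfl⟩ := mem_conjParts.1 hx
  obtain ⟨-, k, -, rfl⟩ := mem_conjParts.1 hy
  have hanti := partsGe_antitone p.parts
  -- Where `partsGe` leaves the value `y`, at `j`, it must drop to `x`: anything strictly between
  -- would be a part of the conjugate between `x` and `y`. So `y - x` is the multiplicity of `j`.
  obtain ⟨j, hj, hj1⟩ :=
    Nat.exists_eq_and_succ_ne (partsGe p.parts) (hanti.reflect_lt hxy).le hxy.ne
  have hjk' : j < k' := hanti.reflect_lt (hj ▸ hxy)
  have hsucc : partsGe p.parts (j + 1) = partsGe p.parts k' := by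
    have hge := hanti hjk'
    have hlt := (hj ▸ hanti j.le_succ).lt_of_ne hj1
    by_contra hne
    exact hgap _ (partsGe_mem_conjParts (by omega) (by omega)) ⟨hge.lt_of_ne' hne, hlt⟩
  have hcount := count_add_partsGe_succ p.parts j
  rw [hsucc, hj] at hcount
  have hodd := h j (Multiset.count_pos.1 (by omega))
  rw [Nat.odd_iff] at hodd ⊢
  rw [Nat.even_iff]
  omega

lemma smallestPartOdd_conj (hn : 0 < n) (h : OddMultAll p) : SmallestPartOdd p.conj := by
  have hne : p.parts.toFinset.Nonempty :=
    Multiset.toFinset_nonempty.2 fun hp => hn.ne (by simpa [hp] using p.parts_sum)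
  obtain ⟨M, hM, hMmax⟩ := p.parts.toFinset.exists_max_image id hne
  rw [Multiset.mem_toFinset] at hM
  have hM0 : partsGe p.parts (M + 1) = 0 := Nat.eq_zero_of_not_pos fun hpos =>
    let ⟨a, ha, hMa⟩ := exists_le_of_partsGe_pos hpos
    (hMmax a (Multiset.mem_toFinset.2 ha)).not_gt hMa
  have hcount := count_add_partsGe_succ p.parts M
  rw [hM0, add_zero] at hcount
  refine ⟨partsGe p.parts M, partsGe_mem_conjParts (p.parts_pos hM)
    (hcount ▸ Multiset.count_pos.2 hM), hcount ▸ h M hM, fun c hc => ?_⟩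
  exact (le_partsGe_succ_or_partsGe_le_of_mem_conjParts hc M).resolve_left
    (hM0 ▸ (p.conj.parts_pos hc).not_ge)

lemma oddMultAll_of_conj (hpa : ParityAlternating p.conj) (hsm : SmallestPartOdd p.conj) :
    OddMultAll p := by
  intro a ha
  have hcount := count_add_partsGe_succ p.parts a
  have hcpos := Multiset.count_pos.2 ha
  have hmem : partsGe p.parts a ∈ p.conj.parts :=
    partsGe_mem_conjParts (p.parts_pos ha) (by omega)
  rcases Nat.eq_zero_or_pos (partsGe p.parts (a + 1)) with h0 | hpos
  · obtain ⟨m, hm, hodd, hmin⟩ := hsm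
    have hm_eq : m = partsGe p.parts a := le_antisymm (hmin _ hmem)
      ((le_partsGe_succ_or_partsGe_le_of_mem_conjParts hm a).resolve_left
        (h0 ▸ (p.conj.parts_pos hm).not_ge))
    rw [h0, add_zero] at hcount
    rwa [hcount, ← hm_eq]
  · have hiff := hpa _ (partsGe_mem_conjParts (by omega) hpos) _ hmem (by omega)
      fun c hc hbetween => by
        have := le_partsGe_succ_or_partsGe_le_of_mem_conjParts hc a
        omega
    rw [← hcount, Nat.odd_iff, Nat.even_iff] at hiff
    rw [Nat.odd_iff]
    omega

lemma oddMultAll_iff_conj (hn : 0 < n) :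
    OddMultAll p ↔ ParityAlternating p.conj ∧ SmallestPartOdd p.conj :=
  ⟨fun h => ⟨p.parityAlternating_conj h, p.smallestPartOdd_conj hn h⟩,
    fun h => p.oddMultAll_of_conj h.1 h.2⟩

end Nat.Partition

theorem conj_bijection_smallest_odd (n : ℕ) (hn : 1 ≤ n) :
    ∃ e : {p : n.Partition // OddMultAll p} ≃
          {p : n.Partition // ParityAlternating p ∧ SmallestPartOdd p},
      (∀ p, (e p).val.parts = conjParts p.val.parts) ∧
      (∀ q, (e.symm q).val.parts = conjParts q.val.parts) :=
  ⟨(Nat.Partition.conj_involutive.toPerm _).subtypeEquiv fun p => p.oddMultAll_iff_conj hn,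
    fun _ => rfl, fun _ => rfl⟩
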